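/- arXiv:1511.09327 — 3 statements merged into one kernel-verified Lean document; each statement's English description precedes it below -/
import Mathlib

section
/- (Fine and Wilf) Let c and d be nonempty words of lengths m and n respectively. If the infinite periodic extensions of c and d (i.e., c^∞ and d^∞) agree on a prefix of length at least m + n - gcd(m,n), then c and d are powers of a common word. In particular, agreement on a prefix of length m + n - 1 suffices. -/
theorem fw_core {α : Type*} : ∀ N m n, m + n ≤ N → 0 < m → 0 < n →
    ∀ e : ℕ → α,
    (∀ i, i + m < m + n - Nat.gcd m n → e i = e (i + m)) →
    (∀ i, i + n < m + n - Nat.gcd m n → e i = e (i + n)) →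
    ∀ i, i < m + n - Nat.gcd m n → e i = e (i % Nat.gcd m n) := by
  intro N
  induction N with
  | zero => intro m n h hm; exact absurd (Nat.le_zero.mp h) (by omega)
  | succ N ih =>
    intro m n hN hm hn e pm pn i hi
    have hgm : Nat.gcd m n ∣ m := Nat.gcd_dvd_left m n
    have hgn : Nat.gcd m n ∣ n := Nat.gcd_dvd_right m n
    have hg0 : 0 < Nat.gcd m n := Nat.gcd_pos_of_pos_left n hm
    have hgm' : Nat.gcd m n ≤ m := Nat.le_of_dvd hm hgm
    have hgn' : Nat.gcd m n ≤ n := Nat.le_of_dvd hn hgn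
    rcases lt_trichotomy m n with hlt | heq | hlt
    · -- m < n
      have hgd : Nat.gcd m (n - m) = Nat.gcd m n := Nat.gcd_sub_self_right (le_of_lt hlt)
      have hdvd : Nat.gcd m n ∣ n - m := Nat.dvd_sub hgn hgm
      have hnm : Nat.gcd m n ≤ n - m := Nat.le_of_dvd (by omega) hdvd
      have ih' := ih m (n - m) (by omega) hm (by omega) e ?_ ?_
      · rw [hgd] at ih'
        rcases Nat.lt_or_ge i (m + (n - m) - Nat.gcd m n) with h1 | h1
        · exact ih' i h1
        · have him : m ≤ i := by omega
          have h2 : i - m + m = i := by omega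
          have e1 : e (i - m) = e i := by
            have := pm (i - m) (by omega)
            rwa [h2] at this
          obtain ⟨k, hk⟩ := hgm
          have e2 : e (i - m) = e ((i - m) % Nat.gcd m n) := ih' (i - m) (by omega)
          have e3 : (i - m) % Nat.gcd m n = i % Nat.gcd m n := by
            have h4 := Nat.add_mul_mod_self_left (i - m) (Nat.gcd m n) k
            rw [← hk, h2] at h4
            exact h4.symm
          rw [← e1, e2, e3]
      · intro j hj
        rw [hgd] at hj
        exact pm j (by omega)
      · intro j hj
        rw [hgd] at hj
        have s1 : e j = e (j + n) := pn j (by omega)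
        have s2 : e (j + (n - m)) = e (j + (n - m) + m) := pm (j + (n - m)) (by omega)
        have h3 : j + (n - m) + m = j + n := by omega
        rw [h3] at s2
        rw [s1, ← s2]
    · -- m = n
      have hg : Nat.gcd m n = m := by rw [← heq, Nat.gcd_self]
      have : i % Nat.gcd m n = i := Nat.mod_eq_of_lt (by omega)
      rw [this]
    · -- n < m
      have hgd : Nat.gcd (m - n) n = Nat.gcd m n := Nat.gcd_sub_self_left (le_of_lt hlt)
      have hdvd : Nat.gcd m n ∣ m - n := Nat.dvd_sub hgm hgn
      have hnm : Nat.gcd m n ≤ m - n := Nat.le_of_dvd (by omega) hdvd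
      have ih' := ih (m - n) n (by omega) (by omega) hn e ?_ ?_
      · rw [hgd] at ih'
        rcases Nat.lt_or_ge i (m - n + n - Nat.gcd m n) with h1 | h1
        · exact ih' i h1
        · have him : n ≤ i := by omega
          have h2 : i - n + n = i := by omega
          have e1 : e (i - n) = e i := by
            have := pn (i - n) (by omega)
            rwa [h2] at this
          obtain ⟨k, hk⟩ := hgn
          have e2 : e (i - n) = e ((i - n) % Nat.gcd m n) := ih' (i - n) (by omega)
          have e3 : (i - n) % Nat.gcd m n = i % Nat.gcd m n := by
            have h4 := Nat.add_mul_mod_self_left (i - n) (Nat.gcd m n) k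
            rw [← hk, h2] at h4
            exact h4.symm
          rw [← e1, e2, e3]
      · intro j hj
        rw [hgd] at hj
        have s1 : e j = e (j + m) := pm j (by omega)
        have s2 : e (j + (m - n)) = e (j + (m - n) + n) := pn (j + (m - n)) (by omega)
        have h3 : j + (m - n) + n = j + m := by omega
        rw [h3] at s2
        rw [s1, ← s2]
      · intro j hj
        rw [hgd] at hj
        exact pn j (by omega)

/-- Fine and Wilf: if the periodic extensions of two nonempty words of lengths `m` and `n`
agree on a prefix of length `m + n - gcd m n`, then the words are powers of a common word. -/
theorem fine_and_wilf {α : Type*} (m n : ℕ) (hm : 0 < m) (hn : 0 < n)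
    (c : Fin m → α) (d : Fin n → α)
    (hagree : ∀ i < m + n - Nat.gcd m n,
      c ⟨i % m, Nat.mod_lt i hm⟩ = d ⟨i % n, Nat.mod_lt i hn⟩) :
    ∃ (g : ℕ) (hg : 0 < g) (u : Fin g → α) (p q : ℕ),
      0 < p ∧ 0 < q ∧ m = p * g ∧ n = q * g ∧
      (∀ i : Fin m, c i = u ⟨(i : ℕ) % g, Nat.mod_lt _ hg⟩) ∧
      (∀ j : Fin n, d j = u ⟨(j : ℕ) % g, Nat.mod_lt _ hg⟩) := by
  set g := Nat.gcd m n with hgdef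
  have hgm : g ∣ m := Nat.gcd_dvd_left m n
  have hgn : g ∣ n := Nat.gcd_dvd_right m n
  have hg0 : 0 < g := Nat.gcd_pos_of_pos_left n hm
  have hgm' : g ≤ m := Nat.le_of_dvd hm hgm
  have hgn' : g ≤ n := Nat.le_of_dvd hn hgn
  set e : ℕ → α := fun i => c ⟨i % m, Nat.mod_lt i hm⟩ with he
  have hpm : ∀ i, i + m < m + n - g → e i = e (i + m) := by
    intro i _
    simp only [he, Nat.add_mod_right]
  have hpn : ∀ i, i + n < m + n - g → e i = e (i + n) := by
    intro i hi
    have h1 := hagree i (by omega)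
    have h2 := hagree (i + n) (by omega)
    simp only [he]
    rw [h1, h2]
    exact congrArg d (Fin.ext (Nat.add_mod_right i n).symm)
  have key := fw_core (m + n) m n le_rfl hm hn e hpm hpn
  refine ⟨g, hg0, fun k => e k, m / g, n / g,
    Nat.div_pos hgm' hg0, Nat.div_pos hgn' hg0,
    (Nat.div_mul_cancel hgm).symm, (Nat.div_mul_cancel hgn).symm, ?_, ?_⟩
  · intro i
    have h1 : e (i : ℕ) = c i := by
      simp only [he]
      congr 1
      exact Fin.ext (Nat.mod_eq_of_lt i.isLt)
    have h2 : e (i : ℕ) = e ((i : ℕ) % g) := key i (by omega)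
    rw [← h1, h2]
  · intro j
    have h1 : e (j : ℕ) = d j := by
      have := hagree (j : ℕ) (by omega)
      simp only [he]
      rw [this]
      congr 1
      exact Fin.ext (Nat.mod_eq_of_lt j.isLt)
    have h2 : e (j : ℕ) = e ((j : ℕ) % g) := key j (by omega)
    rw [← h1, h2]
end

section
/- Let c be a primitive cyclic word of length n. If positions i, j with i ≢ j (mod n) satisfy c^∞(i+k) = c^∞(j+k) for 0 ≤ k ≤ ℓ and the pair (j, i) also occurs in this double path, i.e., there exists 0 < t ≤ ℓ with i + t ≡ j (mod n) and j + t ≡ i (mod n), then c is a square (n is even and c equals the concatenation of a word with itself), contradicting primitivity. -/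
/-- If a double path of a primitive cyclic word `c` of length `n` contains both `(i,j)`
and `(j,i)`, then `c` is a square, contradicting primitivity. -/
theorem primitive_double_path_no_swap {α : Type*} (n : ℕ) (hn : 0 < n)
    (c : ℕ → α) (hper : ∀ i, c (i + n) = c i)
    (hprim : ¬ ∃ p, 0 < p ∧ p < n ∧ p ∣ n ∧ ∀ i, c (i + p) = c i)
    (i j ℓ : ℕ) (hij : i % n ≠ j % n)
    (hdp : ∀ k ≤ ℓ, c (i + k) = c (j + k))
    (t : ℕ) (ht0 : 0 < t) (htl : t ≤ ℓ)
    (h1 : (i + t) % n = j % n) (h2 : (j + t) % n = i % n) : False := by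
  -- c only depends on residue mod n
  have hmod : ∀ x, c x = c (x % n) := by
    intro x
    induction x using Nat.strong_induction_on with
    | _ x ih =>
      rcases lt_or_ge x n with h | h
      · rw [Nat.mod_eq_of_lt h]
      · have e : x - n + n = x := Nat.sub_add_cancel h
        rw [← e, hper, Nat.add_mod_right]
        exact ih (x - n) (by omega)
  have hc : ∀ a b, a % n = b % n → c a = c b := by
    intro a b h; rw [hmod a, hmod b, h]
  -- n ∣ t + t
  have hdvd : n ∣ t + t := by
    have e : (i + (t + t)) % n = i % n := by
      have h1' : (i + t + t) % n = (j + t) % n := Nat.ModEq.add_right t h1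
      rw [h2] at h1'
      rw [show i + (t + t) = i + t + t by omega, h1']
    have := (Nat.modEq_iff_dvd' (Nat.le_add_right i (t + t))).mp e.symm
    simpa using this
  -- n ∤ t
  have hnt : ¬ n ∣ t := by
    rintro ⟨q, rfl⟩
    apply hij
    rw [← h1]
    simp [Nat.add_mul_mod_self_left]
  set m := t % n with hm
  have hm0 : 0 < m := Nat.pos_of_ne_zero (fun h => hnt (Nat.dvd_iff_mod_eq_zero.mpr h))
  have hmlt : m < n := Nat.mod_lt t hn
  have hmle : m ≤ t := Nat.mod_le t n
  -- n = m + m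
  have h2m : m + m = n := by
    have hmm : m + m ≡ t + t [MOD n] := (Nat.mod_modEq t n).add (Nat.mod_modEq t n)
    have : n ∣ m + m := (Nat.modEq_zero_iff_dvd).mp
      (hmm.trans ((Nat.modEq_zero_iff_dvd).mpr hdvd))
    obtain ⟨q, hq⟩ := this
    have hq1 : q = 1 := by
      rcases Nat.lt_or_ge q 2 with h | h
      · interval_cases q <;> omega
      · exfalso
        have := Nat.mul_le_mul_left n h
        omega
    subst hq1
    omega
  -- local shift property
  have A : ∀ k, k ≤ m → c (i + k) = c (i + k + m) := by
    intro k hk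
    have hkl : k ≤ ℓ := le_trans (hk.trans hmle) htl
    rw [hdp k hkl]
    apply hc
    have e1 : j + k ≡ i + t + k [MOD n] := (Nat.ModEq.add_right k h1).symm
    have e2 : i + t + k ≡ i + m + k [MOD n] :=
      Nat.ModEq.add_right k (Nat.ModEq.add_left i (Nat.mod_modEq t n).symm)
    have := e1.trans e2
    rwa [show i + m + k = i + k + m by omega] at this
  -- extend to all shifts from i
  have B : ∀ k, c (i + k) = c (i + k + m) := by
    intro k
    induction k using Nat.strong_induction_on with
    | _ k ih =>
      rcases le_or_gt k m with hk | hk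
      · exact A k hk
      · rcases lt_or_ge k n with hkn | hkn
        · -- m < k < n : use A at u = k - m
          have hu : k - m ≤ m := by omega
          have := A (k - m) hu
          have e1 : c (i + k) = c (i + (k - m)) := by
            rw [show i + k = i + (k - m) + m by omega] at *
            exact (A (k - m) hu).symm
          have e2 : c (i + k + m) = c (i + (k - m)) := by
            rw [show i + k + m = i + (k - m) + n by omega, hper]
          rw [e1, e2]
        · -- k ≥ n : reduce by n
          have ih' := ih (k - n) (by omega)
          have e1 : c (i + k) = c (i + (k - n)) := by
            rw [show i + k = i + (k - n) + n by omega, hper]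
          have e2 : c (i + k + m) = c (i + (k - n) + m) := by
            rw [show i + k + m = i + (k - n) + m + n by omega, hper]
          rw [e1, e2, ← ih']
  -- lift: adding multiples of n doesn't change c
  have hlift : ∀ x q, c (x + n * q) = c x := by
    intro x q
    induction q with
    | zero => simp
    | succ q ihq =>
      rw [show x + n * (q + 1) = x + n * q + n by ring, hper, ihq]
  -- global period m
  have P : ∀ x, c (x + m) = c x := by
    intro x
    have hni : i ≤ n * i := Nat.le_mul_of_pos_left i hn
    have hge : i ≤ x + n * i := by omega
    set k := x + n * i - i with hk
    calc c (x + m) = c (x + m + n * i) := (hlift _ _).symm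
      _ = c (i + k + m) := by rw [show x + m + n * i = i + k + m by omega]
      _ = c (i + k) := (B k).symm
      _ = c (x + n * i) := by rw [show i + k = x + n * i by omega]
      _ = c x := hlift x i
  exact hprim ⟨m, hm0, hmlt, ⟨2, by omega⟩, P⟩
end

section
/- Let c and d be cyclic words of lengths m and n respectively such that no cyclic rotation of c and no cyclic rotation of d are powers of a common word. Then any double path of (c,d), i.e., indices i, j with c^∞(i+k) = d^∞(j+k) for 0 ≤ k ≤ ℓ, satisfies ℓ < m + n - 1. -/
private lemma per_add' {α : Type*} (f : ℕ → α) (m : ℕ) (h : ∀ k, f (k + m) = f k) :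
    ∀ t k, f (k + t * m) = f k
  | 0, k => by simp
  | t + 1, k => by
    rw [Nat.succ_mul, ← Nat.add_assoc, h, per_add' f m h t k]

private lemma per_mod' {α : Type*} (f : ℕ → α) (m : ℕ) (h : ∀ k, f (k + m) = f k) (x : ℕ) :
    f x = f (x % m) := by
  conv_lhs => rw [← Nat.mod_add_div' x m]
  exact per_add' f m h (x / m) (x % m)

private lemma per_gcd' {α : Type*} : ∀ (m : ℕ), ∀ (n : ℕ) (f : ℕ → α),
    (∀ k, f (k + m) = f k) → (∀ k, f (k + n) = f k) → ∀ k, f (k + Nat.gcd m n) = f k := by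
  intro m
  induction m using Nat.strong_induction_on with
  | _ m ih =>
    intro n f hm hn k
    match m, hm, ih with
    | 0, _, _ => simpa using hn k
    | (m + 1), hm, ih =>
      rw [Nat.gcd_rec]
      refine ih (n % (m + 1)) (Nat.mod_lt _ (Nat.succ_pos m)) (m + 1) f ?_ hm k
      intro k
      conv_rhs => rw [← hn k]
      have : k + n = k + n % (m + 1) + n / (m + 1) * (m + 1) := by
        rw [Nat.add_assoc, Nat.mod_add_div' n (m + 1)]
      rw [this, per_add' f (m + 1) hm]

/-- If no cyclic rotations of the cyclic words `c` (of length `m`) and `d` (of length `n`)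
are powers of a common word, then any double path of `(c, d)` has length `< m + n - 1`. -/
theorem double_path_length_bound {α : Type*} (m n : ℕ) (hm : 0 < m) (hn : 0 < n)
    (c d : ℕ → α) (hcper : ∀ k, c (k + m) = c k) (hdper : ∀ k, d (k + n) = d k)
    (hnocommon : ¬ ∃ (g a b : ℕ), 0 < g ∧ g ∣ m ∧ g ∣ n ∧
      (∀ k, c (k + g) = c k) ∧ (∀ k, d (k + g) = d k) ∧ (∀ k, c (a + k) = d (b + k)))
    (i j ℓ : ℕ) (hdp : ∀ k ≤ ℓ, c (i + k) = d (j + k)) :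
    ℓ < m + n - 1 := by
  by_contra hcon
  push_neg at hcon
  -- so m + n - 1 ≤ ℓ
  have hl : m + n ≤ ℓ + 1 := by omega
  -- the shifted word c(i + ·) has period n up to m, hence c has period n globally
  have key_c : ∀ k, c (i + k + n) = c (i + k) := by
    have h1 : ∀ k < m, c (i + k + n) = c (i + k) := by
      intro k hk
      have hk1 : k ≤ ℓ := by omega
      have hk2 : k + n ≤ ℓ := by omega
      have := hdp (k + n) hk2
      rw [← Nat.add_assoc] at this
      rw [this, ← Nat.add_assoc, hdper (j + k), hdp k hk1]
    intro k
    have hF : ∀ x, c (i + x + n) = c (i + x % m + n) := by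
      intro x
      have := per_mod' (fun t => c (i + t + n)) m
        (fun t => by beta_reduce; rw [show i + (t + m) + n = (i + t + n) + m by ring, hcper]) x
      simpa using this
    have hG : ∀ x, c (i + x) = c (i + x % m) := by
      intro x
      have := per_mod' (fun t => c (i + t)) m
        (fun t => by beta_reduce; rw [show i + (t + m) = (i + t) + m by ring, hcper]) x
      simpa using this
    rw [hF, hG, h1 (k % m) (Nat.mod_lt _ hm)]
  have hcn : ∀ x, c (x + n) = c x := by
    intro x
    have h1 : c (x + n) = c (x + n + i * m) := (per_add' c m hcper i (x + n)).symm
    have h2 : c x = c (x + i * m) := (per_add' c m hcper i x).symm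
    have hx : i ≤ x + i * m := by
      calc i = i * 1 := by ring
      _ ≤ i * m := Nat.mul_le_mul_left i hm
      _ ≤ x + i * m := Nat.le_add_left _ _
    obtain ⟨k, hk⟩ := Nat.exists_eq_add_of_le hx
    rw [h1, h2, show x + n + i * m = x + i * m + n by ring, hk, key_c]
  -- similarly d has period m globally
  have key_d : ∀ k, d (j + k + m) = d (j + k) := by
    have h1 : ∀ k < n, d (j + k + m) = d (j + k) := by
      intro k hk
      have hk1 : k ≤ ℓ := by omega
      have hk2 : k + m ≤ ℓ := by omega
      have := hdp (k + m) hk2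
      rw [show i + (k + m) = i + k + m by ring, show j + (k + m) = j + k + m by ring] at this
      rw [← this, hcper (i + k), hdp k hk1]
    intro k
    have hF : ∀ x, d (j + x + m) = d (j + x % n + m) := by
      intro x
      have := per_mod' (fun t => d (j + t + m)) n
        (fun t => by beta_reduce; rw [show j + (t + n) + m = (j + t + m) + n by ring, hdper]) x
      simpa using this
    have hG : ∀ x, d (j + x) = d (j + x % n) := by
      intro x
      have := per_mod' (fun t => d (j + t)) n
        (fun t => by beta_reduce; rw [show j + (t + n) = (j + t) + n by ring, hdper]) x
      simpa using this
    rw [hF, hG, h1 (k % n) (Nat.mod_lt _ hn)]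
  have hdm : ∀ x, d (x + m) = d x := by
    intro x
    have h1 : d (x + m) = d (x + m + j * n) := (per_add' d n hdper j (x + m)).symm
    have h2 : d x = d (x + j * n) := (per_add' d n hdper j x).symm
    have hx : j ≤ x + j * n := by
      calc j = j * 1 := by ring
      _ ≤ j * n := Nat.mul_le_mul_left j hn
      _ ≤ x + j * n := Nat.le_add_left _ _
    obtain ⟨k, hk⟩ := Nat.exists_eq_add_of_le hx
    rw [h1, h2, show x + m + j * n = x + j * n + m by ring, hk, key_d]
  -- both have period g = gcd m n
  set g := Nat.gcd m n with hg
  have hcg : ∀ k, c (k + g) = c k := per_gcd' m n c hcper hcn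
  have hdg : ∀ k, d (k + g) = d k := per_gcd' m n d hdm hdper
  have hgpos : 0 < g := Nat.gcd_pos_of_pos_left n hm
  -- full agreement
  have hagree : ∀ k, c (i + k) = d (j + k) := by
    intro k
    have hF : c (i + k) = c (i + k % g) := by
      have := per_mod' (fun t => c (i + t)) g
        (fun t => by beta_reduce; rw [show i + (t + g) = (i + t) + g by ring, hcg]) k
      simpa using this
    have hG : d (j + k) = d (j + k % g) := by
      have := per_mod' (fun t => d (j + t)) g
        (fun t => by beta_reduce; rw [show j + (t + g) = (j + t) + g by ring, hdg]) k
      simpa using this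
    have hkl : k % g ≤ ℓ := by
      have := Nat.mod_lt k hgpos
      have hgm : g ≤ m := Nat.le_of_dvd hm (Nat.gcd_dvd_left m n)
      omega
    rw [hF, hG, hdp _ hkl]
  exact hnocommon ⟨g, i, j, hgpos, Nat.gcd_dvd_left m n, Nat.gcd_dvd_right m n,
    hcg, hdg, hagree⟩
end
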